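/- Let S be a semigroup and I a two-sided ideal of S which is an inverse subsemigroup. Then for every idempotent e of S and every idempotent f of I, ef = fe. -/
import Mathlib


/-- An inverse semigroup: a semigroup in which every element has a unique
generalized inverse `star s`. -/
class InverseSemigroup (S : Type*) extends Semigroup S where
  star : S → S
  mul_star_mul : ∀ s : S, s * star s * s = s
  star_mul_star : ∀ s : S, star s * s * star s = star s
  star_unique : ∀ s t : S, s * t * s = s → t * s * t = t → t = star s

postfix:max "⋆" => InverseSemigroup.star

private lemma idem_mul_aux {S : Type*} [Semigroup S] (I : Set S)
    (hI : ∀ s t : S, t ∈ I → s * t ∈ I ∧ t * s ∈ I)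
    (hinv : ∀ a ∈ I, ∃! b, b ∈ I ∧ a * b * a = a ∧ b * a * b = b)
    (a b : S) (ha : a * a = a) (hb : b * b = b) (hab : a * b ∈ I) :
    (a * b) * (a * b) = a * b := by
  have ha' : ∀ t, a * (a * t) = a * t := fun t => by rw [← mul_assoc, ha]
  have hb' : ∀ t, b * (b * t) = b * t := fun t => by rw [← mul_assoc, hb]
  obtain ⟨x, ⟨hxI, hx1, hx2⟩, hxu⟩ := hinv (a * b) hab
  have hx1' : ∀ t, a * (b * (x * (a * (b * t)))) = a * (b * t) := fun t => by
    have := congrArg (· * t) hx1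
    simpa only [mul_assoc] using this
  have hx2' : ∀ t, x * (a * (b * (x * t))) = x * t := fun t => by
    have := congrArg (· * t) hx2
    simpa only [mul_assoc] using this
  have hyI : b * x * a ∈ I := (hI a _ (hI b x hxI).1).2
  have hy1 : (a * b) * (b * x * a) * (a * b) = a * b := by
    simp only [mul_assoc]
    rw [hb', ha']
    simpa only [mul_assoc] using hx1
  have hy2 : (b * x * a) * (a * b) * (b * x * a) = b * x * a := by
    simp only [mul_assoc]
    rw [ha', hb', hx2']
  have hxy : b * x * a = x := hxu _ ⟨hyI, hy1, hy2⟩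
  have hxx : x * x = x := by
    have h : (b * x * a) * (b * x * a) = b * x * a := by
      simp only [mul_assoc]
      rw [hx2']
    rw [hxy] at h
    exact h
  obtain ⟨y, hy, hyu⟩ := hinv x hxI
  have h1 : a * b = y := hyu (a * b) ⟨hab, hx2, hx1⟩
  have h2 : x = y := hyu x ⟨hxI, by rw [hxx, hxx], by rw [hxx, hxx]⟩
  have habx : a * b = x := h1.trans h2.symm
  rw [habx, hxx]

theorem stmt1 {S : Type*} [Semigroup S] (I : Set S)
    (hI : ∀ s t : S, t ∈ I → s * t ∈ I ∧ t * s ∈ I)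
    (hinv : ∀ a ∈ I, ∃! b, b ∈ I ∧ a * b * a = a ∧ b * a * b = b)
    (e f : S) (he : e * e = e) (hf : f ∈ I) (hfe : f * f = f) :
    e * f = f * e := by
  have he' : ∀ t, e * (e * t) = e * t := fun t => by rw [← mul_assoc, he]
  have hf' : ∀ t, f * (f * t) = f * t := fun t => by rw [← mul_assoc, hfe]
  have hefI : e * f ∈ I := (hI e f hf).1
  have hfeI : f * e ∈ I := (hI e f hf).2
  have hef : (e * f) * (e * f) = e * f := idem_mul_aux I hI hinv e f he hfe hefI
  have hfe2 : (f * e) * (f * e) = f * e := idem_mul_aux I hI hinv f e hfe he hfeI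
  obtain ⟨x, hx, hxu⟩ := hinv (e * f) hefI
  have h1 : f * e = x := by
    refine hxu (f * e) ⟨hfeI, ?_, ?_⟩
    · -- (e*f)*(f*e)*(e*f) = e*f
      have : (e * f) * (f * e) * (e * f) = (e * f) * (e * f) := by
        simp only [mul_assoc]
        rw [hf', he']
      rw [this, hef]
    · have : (f * e) * (e * f) * (f * e) = (f * e) * (f * e) := by
        simp only [mul_assoc]
        rw [he', hf']
      rw [this, hfe2]
  have h2 : e * f = x := by
    refine hxu (e * f) ⟨hefI, ?_, ?_⟩ <;> rw [hef, hef]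
  exact h2.trans h1.symm
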